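/- arXiv:1801.07002 — 2 statements merged into one kernel-verified Lean document; each statement's English description precedes it below -/
import Mathlib

section
/- Let n be a natural number and N = 2n + 1. Let A be the unital associative ℝ-algebra presented by generators x_0, …, x_{N−1} subject to the relations: x_i² = 1 for all i; x_{2k}·x_{2k+1} = −x_{2k+1}·x_{2k} for every 0 ≤ k < n; x_{N−1} commutes with every generator; and x_i·x_j = x_j·x_i for every other pair i ≠ j among the first 2n generators (i.e., whenever {i,j} ⊆ {0,…,2n−1} is not of the form {2k, 2k+1}). Then A is isomorphic, as an ℝ-algebra, to the product algebra M_{2^n}(ℝ) × M_{2^n}(ℝ). (This algebra A is the twisted group algebra 𝒜_ℝ(μ_0^{2n+1}) attached to the quadratic form q_0^{2n+1}(x) = x_1x_2 + ⋯ + x_{2n−1}x_{2n} over the field of two elements.) -/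
/-! The generators `x_{2k}`, `x_{2k+1}` act on `ℝ^{(ℤ/2)^n}` as the Pauli matrices `X_k` (flip
the `k`-th bit) and `Z_k` (the sign `(-1)^{a_k}`), and the central generator `x_{2n}` acts as `+1`
on one copy and `-1` on the other. The `X_k, Z_k` generate the full matrix algebra and `(1, -1)`
separates the two factors, so this representation is onto `M × M`, `M = M_{2^n}(ℝ)`.
Conversely, since the generators square to `1` and commute up to sign, the ordered monomials
`∏_{i ∈ s} x_i` span the presented algebra, whose dimension is therefore at most
`2^{2n+1} = dim (M × M)`. -/

/-- The relations presenting the twisted group algebra `𝒜_ℝ(μ₀^{2n+1})`: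
generators `x_i` (`i : Fin (2n+1)`) with `x_i² = 1`,
`x_{2k} x_{2k+1} = - x_{2k+1} x_{2k}` for `k < n`, the last generator `x_{2n}`
commuting with every generator, and `x_i x_j = x_j x_i` for every other pair `i ≠ j`
among the first `2n` generators. -/
inductive Rel12 (n : ℕ) :
    FreeAlgebra ℝ (Fin (2 * n + 1)) → FreeAlgebra ℝ (Fin (2 * n + 1)) → Prop
  | sq (i : Fin (2 * n + 1)) :
      Rel12 n (FreeAlgebra.ι ℝ i * FreeAlgebra.ι ℝ i) 1
  | anti (k : ℕ) (hk : k < n) :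
      Rel12 n
        (FreeAlgebra.ι ℝ (⟨2 * k, by omega⟩ : Fin (2 * n + 1)) *
          FreeAlgebra.ι ℝ (⟨2 * k + 1, by omega⟩ : Fin (2 * n + 1)))
        (-(FreeAlgebra.ι ℝ (⟨2 * k + 1, by omega⟩ : Fin (2 * n + 1)) *
          FreeAlgebra.ι ℝ (⟨2 * k, by omega⟩ : Fin (2 * n + 1))))
  | commLast (i : Fin (2 * n + 1)) :
      Rel12 n
        (FreeAlgebra.ι ℝ (⟨2 * n, by omega⟩ : Fin (2 * n + 1)) * FreeAlgebra.ι ℝ i)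
        (FreeAlgebra.ι ℝ i * FreeAlgebra.ι ℝ (⟨2 * n, by omega⟩ : Fin (2 * n + 1)))
  | comm (i j : Fin (2 * n + 1)) (hij : i ≠ j)
      (hi : (i : ℕ) < 2 * n) (hj : (j : ℕ) < 2 * n)
      (h : ¬∃ k : ℕ, ((i : ℕ) = 2 * k ∧ (j : ℕ) = 2 * k + 1) ∨
        ((i : ℕ) = 2 * k + 1 ∧ (j : ℕ) = 2 * k)) :
      Rel12 n (FreeAlgebra.ι ℝ i * FreeAlgebra.ι ℝ j) (FreeAlgebra.ι ℝ j * FreeAlgebra.ι ℝ i)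

open Matrix

section OrderedMonomials

variable {K A ι : Type*} [Field K] [Ring A] [Algebra K A] [LinearOrder ι]

def orderedProd (g : ι → A) (s : Finset ι) : A :=
  ((s.sort (· ≤ ·)).map g).prod

@[simp]
lemma orderedProd_empty (g : ι → A) : orderedProd g ∅ = 1 := by
  simp [orderedProd]

lemma orderedProd_insert (g : ι → A) {a : ι} {s : Finset ι} (ha : ∀ x ∈ s, a < x) :
    orderedProd g (insert a s) = g a * orderedProd g s := by
  rw [orderedProd, Finset.sort_insert _ (fun x hx => (ha x hx).le) (fun h => lt_irrefl a (ha a h)),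
    List.map_cons, List.prod_cons, orderedProd]

variable {g : ι → A}

lemma exists_mul_orderedProd_eq_smul (hsq : ∀ i, ∃ c : K, g i * g i = algebraMap K A c)
    (hswap : ∀ i j, j < i → ∃ c : K, g i * g j = c • (g j * g i)) (i : ι) (s : Finset ι) :
    ∃ (c : K) (t : Finset ι), t ⊆ insert i s ∧ g i * orderedProd g s = c • orderedProd g t := by
  induction s using Finset.induction_on_min with
  | empty => exact ⟨1, {i}, subset_rfl, by simp [orderedProd]⟩
  | insert a s ha ih =>
    rcases lt_trichotomy i a with hia | rfl | hai
    · have hi : ∀ x ∈ insert a s, i < x := by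
        simpa using ⟨hia, fun x hx => hia.trans (ha x hx)⟩
      exact ⟨1, insert i (insert a s), subset_rfl, by rw [one_smul, orderedProd_insert g hi]⟩
    · obtain ⟨c, hc⟩ := hsq i
      refine ⟨c, s, (Finset.subset_insert _ _).trans (Finset.subset_insert _ _), ?_⟩
      rw [orderedProd_insert g ha, ← mul_assoc, hc, Algebra.smul_def]
    · obtain ⟨c₀, hc₀⟩ := hswap i a hai
      obtain ⟨c, t, hts, ht⟩ := ih
      have hat : ∀ x ∈ t, a < x := fun x hx => by
        rcases Finset.mem_insert.mp (hts hx) with rfl | hx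
        exacts [hai, ha x hx]
      refine ⟨c₀ * c, insert a t, ?_, ?_⟩
      · rw [Finset.insert_comm]
        exact Finset.insert_subset_insert a hts
      · rw [orderedProd_insert g ha, orderedProd_insert g hat, ← mul_assoc, hc₀, smul_mul_assoc,
          mul_assoc, ht, mul_smul_comm, smul_smul]

lemma span_orderedProd_eq_top (hsq : ∀ i, ∃ c : K, g i * g i = algebraMap K A c)
    (hswap : ∀ i j, j < i → ∃ c : K, g i * g j = c • (g j * g i))
    (hgen : Algebra.adjoin K (Set.range g) = ⊤) :
    Submodule.span K (Set.range (orderedProd g)) = ⊤ := by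
  set P := Submodule.span K (Set.range (orderedProd g))
  have hmul : ∀ i, P ≤ P.comap (LinearMap.mulLeft K (g i)) := fun i =>
    Submodule.span_le.mpr <| by
      rintro _ ⟨s, rfl⟩
      obtain ⟨c, t, -, h⟩ := exists_mul_orderedProd_eq_smul hsq hswap i s
      simpa [h] using P.smul_mem c (Submodule.subset_span ⟨t, rfl⟩)
  rw [eq_top_iff, ← Algebra.top_toSubmodule, ← hgen, Algebra.adjoin_eq_span, Submodule.span_le]
  intro x hx
  induction hx using Submonoid.closure_induction_left with
  | one => exact Submodule.subset_span ⟨∅, orderedProd_empty g⟩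
  | mul_left _ hx _ _ hy =>
    obtain ⟨i, rfl⟩ := hx
    exact hmul i hy

variable [Fintype ι]

lemma finite_of_skewCommuting_generators (hsq : ∀ i, ∃ c : K, g i * g i = algebraMap K A c)
    (hswap : ∀ i j, j < i → ∃ c : K, g i * g j = c • (g j * g i))
    (hgen : Algebra.adjoin K (Set.range g) = ⊤) : Module.Finite K A :=
  Module.finite_def.mpr <| Submodule.fg_def.mpr
    ⟨_, Set.finite_range _, span_orderedProd_eq_top hsq hswap hgen⟩

lemma finrank_le_of_skewCommuting_generators (hsq : ∀ i, ∃ c : K, g i * g i = algebraMap K A c)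
    (hswap : ∀ i j, j < i → ∃ c : K, g i * g j = c • (g j * g i))
    (hgen : Algebra.adjoin K (Set.range g) = ⊤) :
    Module.finrank K A ≤ 2 ^ Fintype.card ι := by
  have h := finrank_range_le_card (R := K) (orderedProd g)
  rwa [Set.finrank, span_orderedProd_eq_top hsq hswap hgen, finrank_top,
    Fintype.card_finset] at h

end OrderedMonomials

lemma Matrix.subalgebra_eq_top_of_single_mem {K m : Type*} [Field K] [Fintype m] [DecidableEq m]
    {S : Subalgebra K (Matrix m m K)} (hdiag : ∀ i, single i i (1 : K) ∈ S)
    (hentry : ∀ i j, ∃ M ∈ S, M i j ≠ 0) : S = ⊤ := by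
  refine eq_top_iff.mpr fun M _ => ?_
  rw [matrix_eq_sum_single M]
  refine S.sum_mem fun i _ => S.sum_mem fun j _ => ?_
  obtain ⟨N, hN, hNij⟩ := hentry i j
  have h : single i j (M i j) = (M i j / N i j) • (single i i 1 * N * single j j 1) := by
    rw [single_mul_mul_single, one_mul, mul_one, smul_single, smul_eq_mul, div_mul_cancel₀ _ hNij]
  rw [h]
  exact S.smul_mem (S.mul_mem (S.mul_mem (hdiag i) hN) (hdiag j)) _

lemma Subalgebra.eq_top_of_diag_mem_of_one_neg_one_mem {K A : Type*} [CommRing K] [Ring A]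
    [Algebra K A] [Invertible (2 : K)] {S : Subalgebra K (A × A)} (hdiag : ∀ a, (a, a) ∈ S)
    (h : ((1 : A), (-1 : A)) ∈ S) : S = ⊤ := by
  have hfst : ((1 : A), (0 : A)) ∈ S := by
    convert S.smul_mem (S.add_mem S.one_mem h) (⅟2 : K) using 1
    ext <;> simp [← two_smul K]
  refine eq_top_iff.mpr fun ⟨a, b⟩ _ => ?_
  have hab : ((a, b) : A × A) = (a, a) * (1, 0) + (b, b) * (1 - (1, 0)) := by
    ext <;> simp
  rw [hab]
  exact S.add_mem (S.mul_mem (hdiag a) hfst) (S.mul_mem (hdiag b) (S.sub_mem S.one_mem hfst))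

namespace Matrix

def shift {G : Type*} [Add G] [DecidableEq G] (R : Type*) [Zero R] [One R] (v : G) :
    Matrix G G R :=
  of fun a b => if a = b + v then 1 else 0

variable {G R : Type*} [AddGroup G] [DecidableEq G] [Semiring R]

@[simp]
lemma shift_apply (v a b : G) : shift R v a b = if a = b + v then 1 else 0 := rfl

@[simp]
lemma shift_zero : shift R (0 : G) = 1 := by
  ext a b
  simp [one_apply]

variable [Fintype G]

lemma shift_mul_shift (v w : G) : shift R v * shift R w = shift R (w + v) := by
  ext a b
  simp [mul_apply, add_assoc]

lemma diagonal_mul_shift (d : G → R) (v : G) :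
    diagonal d * shift R v = shift R v * diagonal fun b => d (b + v) := by
  ext a b
  by_cases h : a = b + v <;> simp [h]

end Matrix

lemma ZMod.eq_zero_or_eq_one_of_two : ∀ x : ZMod 2, x = 0 ∨ x = 1 := by decide

lemma neg_one_pow_val_add_one {R : Type*} [Ring R] (x : ZMod 2) :
    (-1 : R) ^ (x + 1).val = -(-1) ^ x.val := by
  rcases ZMod.eq_zero_or_eq_one_of_two x with rfl | rfl <;>
    simp [ZMod.val_one, show (1 + 1 : ZMod 2) = 0 from rfl]

lemma inv_two_mul_one_add_neg_one_pow_val_mul {K : Type*} [Field K] [NeZero (2 : K)]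
    (x y : ZMod 2) : 2⁻¹ * (1 + (-1 : K) ^ x.val * (-1) ^ y.val) = if y = x then 1 else 0 := by
  rcases ZMod.eq_zero_or_eq_one_of_two x with rfl | rfl <;>
    rcases ZMod.eq_zero_or_eq_one_of_two y with rfl | rfl <;>
    norm_num [ZMod.val_one, inv_mul_cancel₀ (NeZero.ne (2 : K))]

section Pauli

variable (R : Type*) [CommRing R] {n : ℕ}

def pauliX (k : Fin n) : Matrix (Fin n → ZMod 2) (Fin n → ZMod 2) R :=
  shift R (Pi.single k 1)

def pauliZ (k : Fin n) : Matrix (Fin n → ZMod 2) (Fin n → ZMod 2) R :=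
  diagonal fun a => (-1) ^ (a k).val

lemma pauliX_mul_self (k : Fin n) : pauliX R k * pauliX R k = 1 := by
  rw [pauliX, shift_mul_shift, ← Pi.single_add, show (1 + 1 : ZMod 2) = 0 from rfl,
    Pi.single_zero, shift_zero]

lemma pauliZ_mul_self (k : Fin n) : pauliZ R k * pauliZ R k = 1 := by
  simp [pauliZ, ← pow_add, ← two_mul, pow_mul]

lemma commute_pauliX (k l : Fin n) : Commute (pauliX R k) (pauliX R l) := by
  rw [Commute, SemiconjBy, pauliX, pauliX, shift_mul_shift, shift_mul_shift, add_comm]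

lemma commute_pauliZ (k l : Fin n) : Commute (pauliZ R k) (pauliZ R l) :=
  commute_diagonal _ _

lemma commute_pauliX_pauliZ {k l : Fin n} (h : k ≠ l) : Commute (pauliX R k) (pauliZ R l) := by
  rw [Commute, SemiconjBy, pauliZ, pauliX, diagonal_mul_shift]
  simp [Ne.symm h]

lemma pauliX_mul_pauliZ (k : Fin n) : pauliX R k * pauliZ R k = -(pauliZ R k * pauliX R k) := by
  rw [pauliZ, pauliX, diagonal_mul_shift]
  simp [neg_one_pow_val_add_one, ← diagonal_neg]

lemma shift_mem_adjoin_pauliX (v : Fin n → ZMod 2) :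
    shift R v ∈ Algebra.adjoin R (Set.range (pauliX R (n := n))) := by
  rw [← Finset.univ_sum_single v]
  refine Finset.sum_induction _ (fun v => shift R v ∈ Algebra.adjoin R _)
    (fun v w hv hw => ?_) (by rw [shift_zero]; exact Subalgebra.one_mem _) (fun k _ => ?_)
  · rw [add_comm, ← shift_mul_shift]
    exact Subalgebra.mul_mem _ hv hw
  · rcases ZMod.eq_zero_or_eq_one_of_two (v k) with h | h <;> rw [h]
    · rw [Pi.single_zero, shift_zero]
      exact Subalgebra.one_mem _
    · exact Algebra.subset_adjoin ⟨k, rfl⟩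

lemma single_self_mem_adjoin_pauliZ (K : Type*) [Field K] [NeZero (2 : K)] (f : Fin n → ZMod 2) :
    single f f (1 : K) ∈ Algebra.adjoin K (Set.range (pauliZ K (n := n))) := by
  set T := (Algebra.adjoin K (Set.range (pauliZ K (n := n)))).comap (diagonalAlgHom K)
  have hZ : ∀ k, (fun a : Fin n → ZMod 2 => (-1 : K) ^ (a k).val) ∈ T :=
    fun k => Algebra.subset_adjoin ⟨k, rfl⟩
  -- the indicator of `{f}` is the product of the spectral projections `(1 ± Z_k) / 2`
  have hproj : Pi.single f 1 = ∏ k, (2⁻¹ : K) •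
      (1 + (-1 : K) ^ (f k).val • fun a : Fin n → ZMod 2 => (-1 : K) ^ (a k).val) := by
    funext a
    simp only [Finset.prod_apply, Pi.smul_apply, Pi.add_apply, Pi.one_apply, smul_eq_mul,
      inv_two_mul_one_add_neg_one_pow_val_mul, Finset.prod_boole, Pi.single_apply, funext_iff,
      Finset.mem_univ, true_implies]
  have hmem : Pi.single f 1 ∈ T := hproj ▸ T.prod_mem fun k _ =>
    T.smul_mem (T.add_mem T.one_mem (T.smul_mem (hZ k) _)) _
  rw [← diagonal_single]
  exact hmem

lemma adjoin_pauli_eq_top (K : Type*) [Field K] [NeZero (2 : K)] :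
    Algebra.adjoin K (Set.range (pauliX K (n := n)) ∪ Set.range (pauliZ K)) = ⊤ := by
  refine subalgebra_eq_top_of_single_mem (fun f => ?_) (fun i j => ⟨shift K (i - j), ?_, by simp⟩)
  · exact Algebra.adjoin_mono Set.subset_union_right (single_self_mem_adjoin_pauliZ K f)
  · exact Algebra.adjoin_mono Set.subset_union_left (shift_mem_adjoin_pauliX K _)

end Pauli

namespace Rel12

variable (n : ℕ)

def gen (i : Fin (2 * n + 1)) : RingQuot (Rel12 n) :=
  RingQuot.mkAlgHom ℝ (Rel12 n) (FreeAlgebra.ι ℝ i)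

lemma gen_mul_self (i : Fin (2 * n + 1)) : gen n i * gen n i = 1 := by
  rw [gen, ← map_mul, RingQuot.mkAlgHom_rel ℝ (Rel12.sq i), map_one]

lemma exists_gen_mul_gen_eq_smul {i j : Fin (2 * n + 1)} (hji : j < i) :
    ∃ c : ℝ, gen n i * gen n j = c • (gen n j * gen n i) := by
  have hij : i ≠ j := ne_of_gt hji
  obtain ⟨i, hi⟩ := i
  obtain ⟨j, hj⟩ := j
  rw [Fin.mk_lt_mk] at hji
  simp only [gen, ← map_mul]
  by_cases hlast : i = 2 * n
  · subst hlast
    exact ⟨1, by rw [one_smul]; exact RingQuot.mkAlgHom_rel ℝ (Rel12.commLast ⟨j, hj⟩)⟩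
  by_cases hpair : ∃ k, i = 2 * k + 1 ∧ j = 2 * k
  · obtain ⟨k, rfl, rfl⟩ := hpair
    refine ⟨-1, ?_⟩
    rw [RingQuot.mkAlgHom_rel ℝ (Rel12.anti k (by omega)), map_neg, smul_neg, neg_smul, one_smul,
      neg_neg]
  · refine ⟨1, ?_⟩
    rw [one_smul]
    refine RingQuot.mkAlgHom_rel ℝ
      (Rel12.comm _ _ hij (show i < 2 * n by omega) (show j < 2 * n by omega) ?_)
    rintro ⟨k, h | h⟩
    · simp only at h
      omega
    · exact hpair ⟨k, h⟩

lemma adjoin_range_gen : Algebra.adjoin ℝ (Set.range (gen n)) = ⊤ := by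
  rw [show gen n = RingQuot.mkAlgHom ℝ (Rel12 n) ∘ FreeAlgebra.ι ℝ from rfl, Set.range_comp,
    ← AlgHom.map_adjoin, FreeAlgebra.adjoin_range_ι, Algebra.map_top, AlgHom.range_eq_top]
  exact RingQuot.mkAlgHom_surjective ℝ (Rel12 n)

lemma gen_mul_self_eq_algebraMap (i : Fin (2 * n + 1)) :
    ∃ c : ℝ, gen n i * gen n i = algebraMap ℝ _ c :=
  ⟨1, by rw [gen_mul_self, map_one]⟩

instance : Module.Finite ℝ (RingQuot (Rel12 n)) :=
  finite_of_skewCommuting_generators (gen_mul_self_eq_algebraMap n)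
    (fun _ _ => exists_gen_mul_gen_eq_smul n) (adjoin_range_gen n)

lemma finrank_ringQuot_le : Module.finrank ℝ (RingQuot (Rel12 n)) ≤ 2 ^ (2 * n + 1) := by
  simpa using finrank_le_of_skewCommuting_generators (gen_mul_self_eq_algebraMap n)
    (fun _ _ => exists_gen_mul_gen_eq_smul n) (adjoin_range_gen n)



def genImage (i : Fin (2 * n + 1)) :
    Matrix (Fin n → ZMod 2) (Fin n → ZMod 2) ℝ × Matrix (Fin n → ZMod 2) (Fin n → ZMod 2) ℝ :=
  if h : (i : ℕ) < 2 * n then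
    if (i : ℕ) % 2 = 0 then (pauliX ℝ ⟨i / 2, by omega⟩, pauliX ℝ ⟨i / 2, by omega⟩)
    else (pauliZ ℝ ⟨i / 2, by omega⟩, pauliZ ℝ ⟨i / 2, by omega⟩)
  else (1, -1)

variable {n}

lemma genImage_even {k : ℕ} (hk : k < n) :
    genImage n ⟨2 * k, by omega⟩ = (pauliX ℝ ⟨k, hk⟩, pauliX ℝ ⟨k, hk⟩) := by
  simp [genImage, hk]

lemma genImage_odd {k : ℕ} (hk : k < n) :
    genImage n ⟨2 * k + 1, by omega⟩ = (pauliZ ℝ ⟨k, hk⟩, pauliZ ℝ ⟨k, hk⟩) := by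
  simp [genImage, show 2 * k + 1 < 2 * n by omega, Nat.add_mod, show (2 * k + 1) / 2 = k by omega]

lemma genImage_last : genImage n ⟨2 * n, by omega⟩ = (1, -1) := by
  simp [genImage]

lemma genImage_mul_self (i : Fin (2 * n + 1)) : genImage n i * genImage n i = 1 := by
  unfold genImage
  split_ifs <;> simp [Prod.ext_iff, pauliX_mul_self, pauliZ_mul_self]

lemma commute_genImage {i j : Fin (2 * n + 1)} (hi : (i : ℕ) < 2 * n) (hj : (j : ℕ) < 2 * n)
    (h : ¬∃ k : ℕ, ((i : ℕ) = 2 * k ∧ (j : ℕ) = 2 * k + 1) ∨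
      ((i : ℕ) = 2 * k + 1 ∧ (j : ℕ) = 2 * k)) :
    Commute (genImage n i) (genImage n j) := by
  obtain ⟨i, hi'⟩ := i
  obtain ⟨j, hj'⟩ := j
  simp only at hi hj h
  obtain ⟨k, rfl | rfl⟩ := Nat.even_or_odd' i <;> obtain ⟨l, rfl | rfl⟩ := Nat.even_or_odd' j
  · rw [genImage_even (by omega), genImage_even (by omega)]
    exact (commute_pauliX ℝ _ _).prod (commute_pauliX ℝ _ _)
  · have hkl : (⟨k, by omega⟩ : Fin n) ≠ ⟨l, by omega⟩ := by
      rw [Ne, Fin.mk.injEq]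
      exact fun e => h ⟨k, by omega⟩
    rw [genImage_even (by omega), genImage_odd (by omega)]
    exact (commute_pauliX_pauliZ ℝ hkl).prod (commute_pauliX_pauliZ ℝ hkl)
  · have hlk : (⟨l, by omega⟩ : Fin n) ≠ ⟨k, by omega⟩ := by
      rw [Ne, Fin.mk.injEq]
      exact fun e => h ⟨l, by omega⟩
    rw [genImage_odd (by omega), genImage_even (by omega)]
    exact ((commute_pauliX_pauliZ ℝ hlk).prod (commute_pauliX_pauliZ ℝ hlk)).symm
  · rw [genImage_odd (by omega), genImage_odd (by omega)]
    exact (commute_pauliZ ℝ _ _).prod (commute_pauliZ ℝ _ _)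

lemma lift_genImage_eq_of_rel ⦃x y : FreeAlgebra ℝ (Fin (2 * n + 1))⦄ (h : Rel12 n x y) :
    FreeAlgebra.lift ℝ (genImage n) x = FreeAlgebra.lift ℝ (genImage n) y := by
  induction h with
  | sq i => simp [genImage_mul_self]
  | anti k hk =>
    simp [genImage_even hk, genImage_odd hk, pauliX_mul_pauliZ]
  | commLast i =>
    simp only [map_mul, FreeAlgebra.lift_ι_apply, genImage_last]
    ext <;> simp
  | comm i j _ hi hj h =>
    simpa only [map_mul, FreeAlgebra.lift_ι_apply] using (commute_genImage hi hj h).eq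

variable (n)

def toMatrixProd : RingQuot (Rel12 n) →ₐ[ℝ]
    Matrix (Fin n → ZMod 2) (Fin n → ZMod 2) ℝ × Matrix (Fin n → ZMod 2) (Fin n → ZMod 2) ℝ :=
  RingQuot.liftAlgHom ℝ ⟨FreeAlgebra.lift ℝ (genImage n), lift_genImage_eq_of_rel⟩

lemma toMatrixProd_gen (i : Fin (2 * n + 1)) : toMatrixProd n (gen n i) = genImage n i := by
  simp [toMatrixProd, Rel12.gen]

lemma toMatrixProd_surjective : Function.Surjective (toMatrixProd n) := by
  rw [← AlgHom.range_eq_top]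
  refine Subalgebra.eq_top_of_diag_mem_of_one_neg_one_mem (K := ℝ) (fun M => ?_)
    ((AlgHom.mem_range _).mpr ⟨gen n ⟨2 * n, by omega⟩, by rw [toMatrixProd_gen, genImage_last]⟩)
  have hle : Algebra.adjoin ℝ (Set.range (pauliX ℝ (n := n)) ∪ Set.range (pauliZ ℝ)) ≤
      (toMatrixProd n).range.comap ((AlgHom.id ℝ _).prod (AlgHom.id ℝ _)) := by
    refine Algebra.adjoin_le ?_
    rintro _ (⟨⟨k, hk⟩, rfl⟩ | ⟨⟨k, hk⟩, rfl⟩)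
    · exact (AlgHom.mem_range _).mpr
        ⟨gen n ⟨2 * k, by omega⟩, by rw [toMatrixProd_gen, genImage_even hk]; rfl⟩
    · exact (AlgHom.mem_range _).mpr
        ⟨gen n ⟨2 * k + 1, by omega⟩, by rw [toMatrixProd_gen, genImage_odd hk]; rfl⟩
  rw [adjoin_pauli_eq_top] at hle
  exact hle Algebra.mem_top

lemma finrank_matrix_prod_matrix :
    Module.finrank ℝ (Matrix (Fin n → ZMod 2) (Fin n → ZMod 2) ℝ ×
      Matrix (Fin n → ZMod 2) (Fin n → ZMod 2) ℝ) = 2 ^ (2 * n + 1) := by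
  simp only [Module.finrank_prod, Module.finrank_matrix, Fintype.card_fun, ZMod.card,
    Fintype.card_fin, Module.finrank_self]
  ring

lemma toMatrixProd_bijective : Function.Bijective (toMatrixProd n) := by
  have hsurj := toMatrixProd_surjective n
  refine ⟨?_, hsurj⟩
  have hdim := le_antisymm ((finrank_ringQuot_le n).trans (finrank_matrix_prod_matrix n).ge)
    (LinearMap.finrank_le_finrank_of_surjective (f := (toMatrixProd n).toLinearMap) hsurj)
  exact (LinearMap.injective_iff_surjective_of_finrank_eq_finrank
    (f := (toMatrixProd n).toLinearMap) hdim).mpr hsurj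

end Rel12

theorem twisted_mu0_odd_iso_prod_matrix_real (n : ℕ) :
    Nonempty (RingQuot (Rel12 n) ≃ₐ[ℝ]
      (Matrix (Fin (2 ^ n)) (Fin (2 ^ n)) ℝ × Matrix (Fin (2 ^ n)) (Fin (2 ^ n)) ℝ)) := by
  let e : (Fin n → ZMod 2) ≃ Fin (2 ^ n) := Fintype.equivFinOfCardEq (by simp)
  exact ⟨(AlgEquiv.ofBijective (Rel12.toMatrixProd n) (Rel12.toMatrixProd_bijective n)).trans
    (AlgEquiv.prodCongr (reindexAlgEquiv ℝ ℝ e) (reindexAlgEquiv ℝ ℝ e))⟩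
end

section
/- Let F be a field, let G be a finitely generated commutative group, and let β : G × G → Fˣ be an alternating bicharacter, i.e., β(g·h, k) = β(g,k)·β(h,k) and β(g, h·k) = β(g,h)·β(g,k) for all g, h, k ∈ G, and β(g,g) = 1 for all g ∈ G. Then there exists a map σ : G × G → Fˣ satisfying the 2-cocycle identity σ(g,h)·σ(g·h, k) = σ(h,k)·σ(g, h·k) for all g, h, k ∈ G, such that β(g,h) = σ(g,h)·σ(h,g)⁻¹ for all g, h ∈ G. -/
open Finset

private lemma zpow_zmod_cast_add {M : Type*} [CommGroup M] (u : M) {n : ℕ}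
    (hu : u ^ (n : ℤ) = 1) (a b : ZMod n) :
    u ^ ((ZMod.cast (a + b) : ℤ)) = u ^ ((ZMod.cast a : ℤ)) * u ^ ((ZMod.cast b : ℤ)) := by
  have hdvd : (n : ℤ) ∣ (ZMod.cast (a + b) : ℤ) - (ZMod.cast a : ℤ) - (ZMod.cast b : ℤ) := by
    rw [← ZMod.intCast_zmod_eq_zero_iff_dvd]
    push_cast [ZMod.intCast_zmod_cast]
    ring
  obtain ⟨c, hc⟩ := hdvd
  have h1 : (ZMod.cast (a + b) : ℤ) = (ZMod.cast a : ℤ) + (ZMod.cast b : ℤ) + n * c := by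
    linarith [hc]
  rw [h1, zpow_add, zpow_add, zpow_mul, hu, one_zpow, mul_one]

private lemma zpow_helper {M : Type*} [CommGroup M] (u : M) {n : ℕ}
    (hu : u ^ (n : ℤ) = 1) (a b : ZMod n) (m : ℤ) :
    u ^ ((ZMod.cast (a + b) : ℤ) * m)
      = u ^ ((ZMod.cast a : ℤ) * m) * u ^ ((ZMod.cast b : ℤ) * m) := by
  have h2 : (u ^ m) ^ (n : ℤ) = 1 := by rw [← zpow_mul, mul_comm, zpow_mul, hu, one_zpow]
  calc u ^ ((ZMod.cast (a + b) : ℤ) * m) = (u ^ m) ^ (ZMod.cast (a + b) : ℤ) := by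
        rw [mul_comm, zpow_mul]
    _ = (u ^ m) ^ (ZMod.cast a : ℤ) * (u ^ m) ^ (ZMod.cast b : ℤ) :=
        zpow_zmod_cast_add (u ^ m) h2 a b
    _ = _ := by rw [← zpow_mul, ← zpow_mul, mul_comm m, mul_comm m]

private lemma main_aux (F : Type*) [Field F] {ι : Type*} [Fintype ι] [DecidableEq ι]
    (N : ι → ℕ) (ρ : ι → ℕ) (hρ : Function.Injective ρ)
    (G : Type*) [CommGroup G] (e : Additive G ≃+ ∀ i, ZMod (N i))
    (β : G → G → Fˣ)
    (hβ₁ : ∀ g h k : G, β (g * h) k = β g k * β h k)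
    (hβ₂ : ∀ g h k : G, β g (h * k) = β g h * β g k)
    (hβalt : ∀ g : G, β g g = 1) :
    ∃ σ : G → G → Fˣ,
      (∀ g h k : G, σ g h * σ (g * h) k = σ h k * σ g (h * k)) ∧
      (∀ g h : G, β g h = σ g h * (σ h g)⁻¹) := by
  -- coordinates
  set x : G → ∀ i, ZMod (N i) := fun g => e (Additive.ofMul g) with hx
  have hxmul : ∀ g h : G, x (g * h) = x g + x h := by
    intro g h; simp [hx, ← map_add]
  -- single homs
  set S : ∀ i, ZMod (N i) →+ Additive G :=
    fun i => (e.symm.toAddMonoidHom).comp (AddMonoidHom.single (fun i => ZMod (N i)) i) with hS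
  set E : ι → G := fun i => Additive.toMul (S i 1) with hE
  have hSpow : ∀ (i : ι) (z : ℤ), Additive.toMul (S i ((z : ZMod (N i)))) = E i ^ z := by
    intro i z
    have : ((z : ZMod (N i))) = z • (1 : ZMod (N i)) := by
      rw [zsmul_eq_mul, mul_one]
    rw [this, map_zsmul, toMul_zsmul, hE]
  -- factorization
  have hfact : ∀ g : G, g = ∏ i, E i ^ ((ZMod.cast (x g i)) : ℤ) := by
    intro g
    have h1 : ∑ i, S i (x g i) = Additive.ofMul g := by
      have : ∀ i, S i (x g i) = e.symm (Pi.single i (x g i)) := fun i => rfl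
      simp_rw [this, ← map_sum]
      rw [Finset.univ_sum_single]
      exact e.symm_apply_apply _
    have h2 : g = Additive.toMul (∑ i, S i (x g i)) := by rw [h1]; rfl
    conv_lhs => rw [h2, toMul_sum]
    refine Finset.prod_congr rfl fun i _ => ?_
    rw [← hSpow i (ZMod.cast (x g i)), ZMod.intCast_zmod_cast]
  -- basic β facts
  have hone : ∀ k : G, β 1 k = 1 := by
    intro k
    have := hβ₁ 1 1 k
    rw [one_mul] at this
    exact (left_eq_mul.mp this)
  set u : ι → ι → Fˣ := fun i j => β (E i) (E j) with hu
  -- homs for expanding β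
  have hβprod₁ : ∀ (f : ι → G) (h : G), β (∏ i, f i) h = ∏ i, β (f i) h := by
    intro f h
    exact map_prod (MonoidHom.mk' (fun g => β g h) (fun a b => hβ₁ a b h)) f univ
  have hβprod₂ : ∀ (g : G) (f : ι → G), β g (∏ i, f i) = ∏ i, β g (f i) := by
    intro g f
    exact map_prod (MonoidHom.mk' (fun k => β g k) (fun a b => hβ₂ g a b)) f univ
  have hβzpow₁ : ∀ (g h : G) (z : ℤ), β (g ^ z) h = (β g h) ^ z := by
    intro g h z
    exact map_zpow (MonoidHom.mk' (fun g => β g h) (fun a b => hβ₁ a b h)) g z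
  have hβzpow₂ : ∀ (g h : G) (z : ℤ), β g (h ^ z) = (β g h) ^ z := by
    intro g h z
    exact map_zpow (MonoidHom.mk' (fun k => β g k) (fun a b => hβ₂ g a b)) h z
  -- expansion of β in coordinates
  have hβexp : ∀ g h : G,
      β g h = ∏ i, ∏ j, u i j ^ ((ZMod.cast (x g i) : ℤ) * (ZMod.cast (x h j) : ℤ)) := by
    intro g h
    conv_lhs => rw [hfact g, hfact h]
    rw [hβprod₁]
    refine Finset.prod_congr rfl fun i _ => ?_
    rw [hβzpow₁, hβprod₂]
    rw [← Finset.prod_zpow]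
    refine Finset.prod_congr rfl fun j _ => ?_
    rw [hβzpow₂, ← zpow_mul, mul_comm]
  -- order of u
  have huord₁ : ∀ i j, u i j ^ ((N i : ℕ) : ℤ) = 1 := by
    intro i j
    rw [hu]
    dsimp only
    rw [← hβzpow₁]
    have : E i ^ ((N i : ℕ) : ℤ) = 1 := by
      rw [← hSpow i (N i)]
      have : (((N i : ℤ)) : ZMod (N i)) = 0 := by
        push_cast
        exact ZMod.natCast_self (N i)
      rw [this, map_zero]
      rfl
    rw [this, hone]
  have huord₂ : ∀ i j, u i j ^ ((N j : ℕ) : ℤ) = 1 := by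
    intro i j
    rw [hu]
    dsimp only
    rw [← hβzpow₂]
    have hE1 : E j ^ ((N j : ℕ) : ℤ) = 1 := by
      rw [← hSpow j (N j)]
      have : (((N j : ℤ)) : ZMod (N j)) = 0 := by
        push_cast
        exact ZMod.natCast_self (N j)
      rw [this, map_zero]
      rfl
    rw [hE1]
    have := hβ₂ (E i) 1 1
    rw [one_mul] at this
    exact (left_eq_mul.mp this)
  -- skew symmetry of u
  have huskew : ∀ i j, u i j * u j i = 1 := by
    intro i j
    have h := hβalt (E i * E j)
    rw [hβ₁, hβ₂, hβ₂, hβalt, hβalt, one_mul, mul_one] at h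
    rw [hu]; exact h
  have hudiag : ∀ i, u i i = 1 := fun i => hβalt (E i)
  -- the cocycle
  set σ : G → G → Fˣ := fun g h => ∏ i, ∏ j,
    if ρ j < ρ i then u i j ^ ((ZMod.cast (x g i) : ℤ) * (ZMod.cast (x h j) : ℤ)) else 1
    with hσ
  have hσ₁ : ∀ g h k : G, σ (g * h) k = σ g k * σ h k := by
    intro g h k
    rw [hσ]
    dsimp only
    rw [← Finset.prod_mul_distrib]
    refine Finset.prod_congr rfl fun i _ => ?_
    rw [← Finset.prod_mul_distrib]
    refine Finset.prod_congr rfl fun j _ => ?_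
    rw [hxmul]
    by_cases hc : ρ j < ρ i
    · simp only [hc, if_true]
      have : (x g + x h) i = x g i + x h i := rfl
      rw [this]
      exact zpow_helper (u i j) (huord₁ i j) (x g i) (x h i) _
    · simp [hc]
  have hσ₂ : ∀ g h k : G, σ g (h * k) = σ g h * σ g k := by
    intro g h k
    rw [hσ]
    dsimp only
    rw [← Finset.prod_mul_distrib]
    refine Finset.prod_congr rfl fun i _ => ?_
    rw [← Finset.prod_mul_distrib]
    refine Finset.prod_congr rfl fun j _ => ?_
    rw [hxmul]
    by_cases hc : ρ j < ρ i
    · simp only [hc, if_true]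
      have h0 : (x h + x k) j = x h j + x k j := rfl
      rw [h0]
      have h2 : ∀ a : ZMod (N j), (ZMod.cast (x g i) : ℤ) * (ZMod.cast a : ℤ)
          = (ZMod.cast a : ℤ) * (ZMod.cast (x g i) : ℤ) := fun a => mul_comm _ _
      rw [h2, h2, h2]
      exact zpow_helper (u i j) (huord₂ i j) (x h j) (x k j) _
    · simp [hc]
  refine ⟨σ, ?_, ?_⟩
  · intro g h k
    rw [hσ₁, hσ₂]
    rw [mul_comm (σ g k) (σ h k), ← mul_assoc, mul_comm (σ g h) (σ h k), mul_assoc]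
  · intro g h
    rw [hβexp g h]
    -- compute (σ h g)⁻¹ reindexed
    have hinv : (σ h g)⁻¹ = ∏ i, ∏ j,
        if ρ i < ρ j then u j i ^ (-((ZMod.cast (x h j) : ℤ) * (ZMod.cast (x g i) : ℤ))) else 1 := by
      rw [hσ]
      dsimp only
      rw [← Finset.prod_inv_distrib]
      simp_rw [← Finset.prod_inv_distrib]
      rw [Finset.prod_comm]
      refine Finset.prod_congr rfl fun i _ => Finset.prod_congr rfl fun j _ => ?_
      rw [apply_ite (fun t : Fˣ => t⁻¹), inv_one, zpow_neg]
    rw [hinv, ← Finset.prod_mul_distrib]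
    refine Finset.prod_congr rfl fun i _ => ?_
    rw [← Finset.prod_mul_distrib]
    refine Finset.prod_congr rfl fun j _ => ?_
    rcases lt_trichotomy (ρ i) (ρ j) with hlt | heq | hgt
    · have h1 : ¬ ρ j < ρ i := by omega
      simp only [hlt, h1, if_true, if_false, one_mul]
      have hji : u i j = (u j i)⁻¹ := eq_inv_of_mul_eq_one_left (huskew i j)
      rw [hji, inv_zpow, ← zpow_neg]
      congr 1
      ring
    · have hij : i = j := hρ heq
      subst hij
      have h1 : ¬ ρ i < ρ i := lt_irrefl _
      simp only [h1, if_false, one_mul, mul_one]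
      rw [hudiag, one_zpow]
    · have h1 : ¬ ρ i < ρ j := by omega
      simp only [hgt, h1, if_true, if_false, mul_one]

theorem alternating_bicharacter_comes_from_two_cocycle
    (F : Type*) [Field F] (G : Type*) [CommGroup G] [Group.FG G]
    (β : G → G → Fˣ)
    (hβ₁ : ∀ g h k : G, β (g * h) k = β g k * β h k)
    (hβ₂ : ∀ g h k : G, β g (h * k) = β g h * β g k)
    (hβalt : ∀ g : G, β g g = 1) :
    ∃ σ : G → G → Fˣ,
      (∀ g h k : G, σ g h * σ (g * h) k = σ h k * σ g (h * k)) ∧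
      (∀ g h : G, β g h = σ g h * (σ h g)⁻¹) := by
  obtain ⟨n, ι₀, fι, p, hp, ee, ⟨f⟩⟩ := AddCommGroup.equiv_free_prod_directSum_zmod (Additive G)
  haveI := fι
  letI : DecidableEq ι₀ := Classical.decEq _
  let q : ι₀ → ℕ := fun i => p i ^ ee i
  let N : Fin n ⊕ ι₀ → ℕ := Sum.elim (fun _ => 0) q
  let e₁ : (Fin n →₀ ℤ) ≃+ (Fin n → ℤ) := Finsupp.addEquivFunOnFinite
  let e₂ : DirectSum ι₀ (fun i => ZMod (q i)) ≃+ ∀ i, ZMod (q i) := DirectSum.addEquivProd _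
  let e₄ : (∀ i : Fin n ⊕ ι₀, ZMod (N i)) ≃+ ((Fin n → ℤ) × ∀ i, ZMod (q i)) :=
    { toEquiv := Equiv.sumPiEquivProdPi (fun i => ZMod (N i)),
      map_add' := fun _ _ => rfl }
  let e : Additive G ≃+ ∀ i : Fin n ⊕ ι₀, ZMod (N i) :=
    f.trans ((e₁.prodCongr e₂).trans e₄.symm)
  let ρ : Fin n ⊕ ι₀ → ℕ := Sum.elim (fun k => (k : ℕ)) (fun i => n + (Fintype.equivFin ι₀ i : ℕ))
  have hρ : Function.Injective ρ := by
    intro a b hab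
    rcases a with a | a <;> rcases b with b | b
    · simpa [ρ, Fin.ext_iff] using hab
    · exfalso; have := a.isLt; simp [ρ] at hab; omega
    · exfalso; have := b.isLt; simp [ρ] at hab; omega
    · simp [ρ] at hab
      exact congrArg Sum.inr ((Fintype.equivFin ι₀).injective (Fin.ext hab))
  exact main_aux F N ρ hρ G e β hβ₁ hβ₂ hβalt
end
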